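/- arXiv:1711.08584 — 3 statements merged into one kernel-verified Lean document; each statement's English description precedes it below -/
import Mathlib

section
/- For integers n ≥ 1 and 1 ≤ k ≤ n, the number of (n,m)-Dyck paths with k peaks summed over all m from 1 to n-1 that start and end with an up step equals C(n-1,k)·C(n-1,k-1). -/
/-
A path that starts and ends with an up step has the shape
U^{a₁} D^{b₁} U^{a₂} ⋯ D^{b_k} U^{a_{k+1}}, and its peaks are exactly the k factors U D between
consecutive runs. Reading off the run lengths identifies such paths with k peaks and n steps of
each kind with pairs of compositions of n into k + 1 and into k parts, of which there are
C(n-1,k) and C(n-1,k-1). The statistic m plays no role: the first up step of such a path starts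
on the diagonal and the last one at (n, n-1), so 1 ≤ m ≤ n-1 holds automatically and the sum
over m counts every such path exactly once.
-/

-- A lattice path is a list of steps: `true` = up step `(0,1)`, `false` = down step `(1,0)`.
/-- The number of up steps of `p` that lie strictly below the line `y = x`
(i.e. up steps starting at a point with `y < x`). -/
def upsBelow (p : List Bool) : ℕ :=
  (List.range p.length).countP fun i =>
    p.getD i false && decide ((p.take i).count true < (p.take i).count false)

/-- `IsNM n m p`: `p` is an `(n,m)`-Dyck path, i.e. a path from `(0,0)` to `(n,n)`
with exactly `m` up steps below the line `y = x`. -/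
def IsNM (n m : ℕ) (p : List Bool) : Prop :=
  p.length = 2 * n ∧ p.count true = n ∧ upsBelow p = m

/-- The number of peaks (`UD` factors) of `p`. -/
def peaks (p : List Bool) : ℕ :=
  (List.range (p.length - 1)).countP fun i => p.getD i false && !p.getD (i + 1) true

/-- The number of `(n,m)`-Dyck paths with exactly `k` peaks. -/
noncomputable def pC (n m k : ℕ) : ℕ :=
  Nat.card {p : List Bool // IsNM n m p ∧ peaks p = k}

/-- The number of `(n,m)`-Dyck paths with exactly `k` peaks whose first step is `a`
and whose last step is `b`. -/
noncomputable def pXY (n m k : ℕ) (a b : Bool) : ℕ :=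
  Nat.card {p : List Bool // IsNM n m p ∧ peaks p = k ∧
    p.head? = some a ∧ p.getLast? = some b}

theorem Nat.card_subtype_eq_sum_card_fiberwise {α β : Type*} {P : α → Prop}
    (hP : {a | P a}.Finite) (f : α → β) (s : Finset β) (hf : ∀ a, P a → f a ∈ s) :
    Nat.card {a // P a} = ∑ b ∈ s, Nat.card {a // P a ∧ f a = b} := by
  classical
  have hfiber (b : β) : {a | P a ∧ f a = b}.Finite := hP.subset fun _ h => h.1
  rw [← Set.coe_ofPred, Nat.card_eq_card_finite_toFinset hP,
    Finset.card_eq_sum_card_fiberwise fun a ha => hf a (by simpa using ha)]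
  refine Finset.sum_congr rfl fun b _ => ?_
  rw [← Set.coe_ofPred, Nat.card_eq_card_finite_toFinset (hfiber b)]
  congr 1
  ext a
  simp

theorem CompositionAsSet.card_boundaries_eq_card_add_two {n : ℕ} (c : CompositionAsSet (n + 1)) :
    c.boundaries.card = (compositionAsSetEquiv (n + 1) c).card + 2 := by
  set s : Finset (Fin n) := compositionAsSetEquiv (n + 1) c with hs
  have hmem (j : Fin n) : j ∈ s ↔ j.castSucc.succ ∈ c.boundaries := by
    rw [hs]
    simp only [compositionAsSetEquiv, Equiv.coe_fn_mk, Set.mem_toFinset]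
    change _ ∈ c.boundaries ↔ _
    rw [show (⟨1 + (j : ℕ), _⟩ : Fin (n + 2)) = j.castSucc.succ from Fin.ext (add_comm _ _)]
  have hb : c.boundaries =
      insert 0 (insert (Fin.last _) (s.map (Fin.castSuccEmb.trans (Fin.succEmb _)))) := by
    ext i
    simp only [Finset.mem_insert, Finset.mem_map, Function.Embedding.trans_apply,
      Fin.coe_castSuccEmb, Fin.coe_succEmb, hmem]
    constructor
    · intro hi
      rcases Fin.eq_zero_or_eq_succ i with rfl | ⟨i, rfl⟩
      · exact Or.inl rfl
      rcases Fin.eq_castSucc_or_eq_last i with ⟨j, rfl⟩ | rfl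
      · exact Or.inr (Or.inr ⟨j, hi, rfl⟩)
      · exact Or.inr (Or.inl rfl)
    · rintro (rfl | rfl | ⟨j, hj, rfl⟩)
      exacts [c.zero_mem, c.getLast_mem, hj]
  rw [hb, Finset.card_insert_of_notMem, Finset.card_insert_of_notMem, Finset.card_map]
  · simpa [Fin.ext_iff] using fun j _ => j.isLt.ne
  · simp [Fin.ext_iff]

theorem Composition.card_subtype_length_eq (n j : ℕ) :
    Nat.card {c : Composition (n + 1) // c.length = j + 1} = n.choose j := by
  have e : {c : Composition (n + 1) // c.length = j + 1} ≃ {s : Finset (Fin n) // s.card = j} :=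
    ((compositionEquiv _).trans (compositionAsSetEquiv _)).subtypeEquiv fun c => by
      rw [← c.toCompositionAsSet_length, CompositionAsSet.length,
        CompositionAsSet.card_boundaries_eq_card_add_two]
      simp [compositionEquiv]
  rw [Nat.card_congr e, Nat.card_eq_fintype_card, Fintype.card_finset_len, Fintype.card_fin]

theorem peaks_cons (c : Bool) (q : List Bool) :
    peaks (c :: q) = (if c = true ∧ q.head? = some false then 1 else 0) + peaks q := by
  cases q with
  | nil => simp [peaks]
  | cons d t =>
    simp only [peaks, List.length_cons, Nat.add_sub_cancel, List.range_succ_eq_map,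
      List.countP_cons, List.countP_map]
    rw [add_comm]
    congr 1
    cases c <;> cases d <;> rfl

theorem peaks_append (l q : List Bool) :
    peaks (l ++ q) = peaks l + peaks q +
      if l.getLast? = some true ∧ q.head? = some false then 1 else 0 := by
  induction l with
  | nil => simp [peaks]
  | cons c l ih =>
    cases l with
    | nil =>
      rw [List.singleton_append, peaks_cons, List.getLast?_singleton]
      simp [peaks, add_comm]
    | cons d l =>
      rw [List.cons_append, peaks_cons, ih, peaks_cons c, List.getLast?_cons_cons,
        List.cons_append, List.head?_cons, List.head?_cons]
      ring

theorem peaks_replicate (m : ℕ) (c : Bool) : peaks (List.replicate m c) = 0 := by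
  induction m with
  | zero => rfl
  | succ m ih =>
    rw [List.replicate_succ, peaks_cons, ih]
    cases m <;> cases c <;> simp [List.replicate_succ]

/-- `ofRuns b xs ys` is `b^{x₁} (!b)^{y₁} b^{x₂} (!b)^{y₂} ⋯`. -/
def ofRuns : Bool → List ℕ → List ℕ → List Bool
  | _, [], _ => []
  | b, x :: xs, ys => List.replicate x b ++ ofRuns (!b) ys xs
termination_by _ xs ys => xs.length + ys.length

@[simp] theorem ofRuns_nil (b : Bool) (ys : List ℕ) : ofRuns b [] ys = [] := by
  rw [ofRuns]

theorem ofRuns_cons (b : Bool) (x : ℕ) (xs ys : List ℕ) :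
    ofRuns b (x :: xs) ys = List.replicate x b ++ ofRuns (!b) ys xs := by
  rw [ofRuns]

theorem length_ofRuns (b : Bool) {xs ys : List ℕ}
    (hs : ys.length ≤ xs.length ∧ xs.length ≤ ys.length + 1) :
    (ofRuns b xs ys).length = xs.sum + ys.sum := by
  induction b, xs, ys using ofRuns.induct with
  | case1 b ys => simp_all
  | case2 b x xs ys ih =>
    simp only [List.length_cons] at hs
    simp [ofRuns_cons, ih (by omega)]
    omega

theorem count_true_ofRuns (b : Bool) {xs ys : List ℕ}
    (hs : ys.length ≤ xs.length ∧ xs.length ≤ ys.length + 1) :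
    (ofRuns b xs ys).count true = if b then xs.sum else ys.sum := by
  induction b, xs, ys using ofRuns.induct with
  | case1 b ys => cases b <;> simp_all
  | case2 b x xs ys ih =>
    simp only [List.length_cons] at hs
    rw [ofRuns_cons, List.count_append, ih (by omega)]
    cases b <;> simp [List.count_replicate]

theorem head?_ofRuns (b : Bool) {x : ℕ} (hx : 0 < x) (xs ys : List ℕ) :
    (ofRuns b (x :: xs) ys).head? = some b := by
  obtain ⟨x, rfl⟩ := Nat.exists_eq_add_of_lt hx
  simp [ofRuns_cons, List.replicate_succ]

theorem getLast?_ofRuns (b : Bool) {xs ys : List ℕ} (hxs : ∀ x ∈ xs, 0 < x)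
    (hys : ∀ y ∈ ys, 0 < y) (hs : ys.length ≤ xs.length ∧ xs.length ≤ ys.length + 1)
    (hne : xs ≠ []) :
    (ofRuns b xs ys).getLast? = some (if xs.length = ys.length + 1 then b else !b) := by
  induction b, xs, ys using ofRuns.induct with
  | case1 b ys => exact absurd rfl hne
  | case2 b x xs ys ih =>
    simp only [List.length_cons] at hs
    rw [ofRuns_cons]
    rcases ys with _ | ⟨y, ys⟩
    · obtain rfl : xs = [] :=
        List.eq_nil_of_length_eq_zero (by simp only [List.length_nil] at hs; omega)
      obtain ⟨x, rfl⟩ := Nat.exists_eq_add_of_lt (hxs x (by simp))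
      simp [List.replicate_succ']
    · have hhead := head?_ofRuns (!b) (hys y (by simp)) ys xs
      rw [List.getLast?_append_of_ne_nil _ (fun h => by simp [h] at hhead),
        ih hys (fun a ha => hxs a (List.mem_cons_of_mem _ ha)) (by omega) (by simp)]
      simp only [List.length_cons] at hs ⊢
      rcases (by omega : ys.length = xs.length ∨ xs.length = ys.length + 1) with h | h <;>
        simp [h]

/-- Every run of `false` but the first is preceded by a run of `true`, forming a peak with it. -/
theorem peaks_ofRuns (b : Bool) {xs ys : List ℕ} (hxs : ∀ x ∈ xs, 0 < x)
    (hys : ∀ y ∈ ys, 0 < y) (hs : ys.length ≤ xs.length ∧ xs.length ≤ ys.length + 1) :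
    peaks (ofRuns b xs ys) = if b then ys.length else xs.length - 1 := by
  induction b, xs, ys using ofRuns.induct with
  | case1 b ys => cases b <;> simp_all [peaks]
  | case2 b x xs ys ih =>
    simp only [List.length_cons] at hs
    obtain ⟨x, rfl⟩ := Nat.exists_eq_add_of_lt (hxs x (by simp))
    rw [ofRuns_cons, peaks_append, peaks_replicate,
      ih hys (fun a ha => hxs a (List.mem_cons_of_mem _ ha)) (by omega)]
    rcases ys with _ | ⟨y, ys⟩
    · obtain rfl : xs = [] :=
        List.eq_nil_of_length_eq_zero (by simp only [List.length_nil] at hs; omega)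
      cases b <;> simp [List.replicate_succ']
    · rw [head?_ofRuns _ (hys y (by simp))]
      cases b <;> simp [List.replicate_succ']

/-- The lengths of the odd-numbered and of the even-numbered maximal runs of `p`. -/
def toRuns : List Bool → List ℕ × List ℕ
  | [] => ([], [])
  | c :: t =>
    (((t.takeWhile (· == c)).length + 1) :: (toRuns (t.dropWhile (· == c))).2,
      (toRuns (t.dropWhile (· == c))).1)
termination_by l => l.length
decreasing_by exact Nat.lt_succ_of_le (List.dropWhile_sublist _).length_le

@[simp] theorem toRuns_nil : toRuns [] = ([], []) := by
  rw [toRuns]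

theorem toRuns_cons (c : Bool) (t : List Bool) :
    toRuns (c :: t) =
      (((t.takeWhile (· == c)).length + 1) :: (toRuns (t.dropWhile (· == c))).2,
        (toRuns (t.dropWhile (· == c))).1) := by
  rw [toRuns]

theorem toRuns_pos (p : List Bool) :
    (∀ x ∈ (toRuns p).1, 0 < x) ∧ ∀ y ∈ (toRuns p).2, 0 < y := by
  induction p using toRuns.induct with
  | case1 => simp
  | case2 c t ih =>
    rw [toRuns_cons]
    exact ⟨List.forall_mem_cons.2 ⟨Nat.succ_pos _, ih.2⟩, ih.1⟩

theorem length_toRuns (p : List Bool) :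
    (toRuns p).2.length ≤ (toRuns p).1.length ∧
      (toRuns p).1.length ≤ (toRuns p).2.length + 1 := by
  induction p using toRuns.induct with
  | case1 => simp
  | case2 c t ih =>
    simp only [toRuns_cons, List.length_cons]
    omega

theorem toRuns_ofRuns (b : Bool) {xs ys : List ℕ} (hxs : ∀ x ∈ xs, 0 < x)
    (hys : ∀ y ∈ ys, 0 < y) (hs : ys.length ≤ xs.length ∧ xs.length ≤ ys.length + 1) :
    toRuns (ofRuns b xs ys) = (xs, ys) := by
  induction b, xs, ys using ofRuns.induct with
  | case1 b ys => simp_all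
  | case2 b x xs ys ih =>
    simp only [List.length_cons] at hs
    obtain ⟨x, rfl⟩ := Nat.exists_eq_add_of_lt (hxs x (by simp))
    have hrest : (ofRuns (!b) ys xs).takeWhile (· == b) = [] ∧
        (ofRuns (!b) ys xs).dropWhile (· == b) = ofRuns (!b) ys xs := by
      rcases ys with _ | ⟨y, ys⟩
      · simp
      · obtain ⟨r, hr⟩ := List.head?_eq_some_iff.1 (head?_ofRuns (!b) (hys y (by simp)) ys xs)
        simp [hr]
    rw [ofRuns_cons, List.replicate_succ, List.cons_append, toRuns_cons,
      List.takeWhile_append_of_pos (by simp), List.dropWhile_append_of_pos (by simp),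
      hrest.1, hrest.2, ih hys (fun a ha => hxs a (List.mem_cons_of_mem _ ha)) (by omega)]
    simp

theorem ofRuns_toRuns {p : List Bool} {c : Bool} (hc : p.head? = some c) :
    ofRuns c (toRuns p).1 (toRuns p).2 = p := by
  induction p using toRuns.induct generalizing c with
  | case1 => simp at hc
  | case2 c' t ih =>
    obtain rfl : c = c' := by simpa using hc.symm
    rw [toRuns_cons, ofRuns_cons, List.replicate_succ, List.cons_append]
    have hdrop : ofRuns (!c) (toRuns (t.dropWhile (· == c))).1 (toRuns (t.dropWhile (· == c))).2 =
        t.dropWhile (· == c) := by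
      rcases hr : t.dropWhile (· == c) with _ | ⟨d, r⟩
      · simp
      · have hd : (d == c) = false := by simpa [hr] using List.head?_dropWhile_not (· == c) t
        rw [← hr]
        exact ih (by rw [hr]; cases c <;> cases d <;> simp_all)
    have htake : List.replicate (t.takeWhile (· == c)).length c = t.takeWhile (· == c) :=
      (List.eq_replicate_iff.2 ⟨rfl, fun d hd => by simpa using List.mem_takeWhile_imp hd⟩).symm
    rw [hdrop, htake, List.takeWhile_append_dropWhile]

def IsUUPath (n k : ℕ) (p : List Bool) : Prop :=
  p.length = 2 * n ∧ p.count true = n ∧ peaks p = k ∧ p.head? = some true ∧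
    p.getLast? = some true

theorem isUUPath_ofRuns {n k : ℕ} (u v : Composition n) (hu : u.length = k + 1)
    (hv : v.length = k) : IsUUPath n k (ofRuns true u.blocks v.blocks) := by
  have hs : v.blocks.length ≤ u.blocks.length ∧ u.blocks.length ≤ v.blocks.length + 1 := by
    simp only [Composition.blocks_length]; omega
  obtain ⟨x, xs, hx⟩ := List.exists_cons_of_length_eq_add_one hu
  refine ⟨?_, ?_, ?_, ?_, ?_⟩
  · rw [length_ofRuns _ hs]; simp; omega
  · simp [count_true_ofRuns _ hs]
  · simp [peaks_ofRuns _ (fun _ => u.blocks_pos) (fun _ => v.blocks_pos) hs, hv]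
  · rw [hx]; exact head?_ofRuns _ (u.blocks_pos (by simp [hx])) _ _
  · rw [getLast?_ofRuns _ (fun _ => u.blocks_pos) (fun _ => v.blocks_pos) hs (by simp [hx]),
      if_pos (by simp only [Composition.blocks_length]; omega)]

theorem IsUUPath.toRuns_sum_length {n k : ℕ} {p : List Bool} (h : IsUUPath n k p) :
    ((toRuns p).1.sum = n ∧ (toRuns p).1.length = k + 1) ∧
      (toRuns p).2.sum = n ∧ (toRuns p).2.length = k := by
  obtain ⟨hlen, hcount, hpeaks, hhead, hlast⟩ := h
  have hp := ofRuns_toRuns hhead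
  obtain ⟨hxs, hys⟩ := toRuns_pos p
  have hs := length_toRuns p
  have hne : (toRuns p).1 ≠ [] := by
    intro h
    rw [← hp, h, ofRuns_nil] at hhead
    simp at hhead
  rw [← hp, getLast?_ofRuns _ hxs hys hs hne] at hlast
  have hshape : (toRuns p).1.length = (toRuns p).2.length + 1 := by
    by_contra h'
    simp [h'] at hlast
  rw [← hp, length_ofRuns _ hs] at hlen
  rw [← hp, count_true_ofRuns _ hs, if_pos rfl] at hcount
  rw [← hp, peaks_ofRuns _ hxs hys hs, if_pos rfl] at hpeaks
  omega

def uuPathEquiv (n k : ℕ) :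
    {p // IsUUPath n k p} ≃
      {c : Composition n // c.length = k + 1} × {c : Composition n // c.length = k} where
  toFun p :=
    have h := p.2.toRuns_sum_length
    (⟨⟨(toRuns p.1).1, fun hx => (toRuns_pos _).1 _ hx, h.1.1⟩, h.1.2⟩,
      ⟨⟨(toRuns p.1).2, fun hy => (toRuns_pos _).2 _ hy, h.2.1⟩, h.2.2⟩)
  invFun uv := ⟨ofRuns true uv.1.1.blocks uv.2.1.blocks, isUUPath_ofRuns _ _ uv.1.2 uv.2.2⟩
  left_inv p := Subtype.ext (ofRuns_toRuns p.2.2.2.2.1)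
  right_inv := by
    rintro ⟨⟨u, hu⟩, ⟨v, hv⟩⟩
    have hs : v.blocks.length ≤ u.blocks.length ∧ u.blocks.length ≤ v.blocks.length + 1 := by
      simp only [Composition.blocks_length]; omega
    have h := toRuns_ofRuns true (fun _ => u.blocks_pos) (fun _ => v.blocks_pos) hs
    simp only [h]

theorem List.countP_range_getD_eq_count_true (l : List Bool) :
    (List.range l.length).countP (l.getD · false) = l.count true := by
  induction l with
  | nil => rfl
  | cons a t ih =>
    rw [List.length_cons, List.range_succ_eq_map, List.countP_cons, List.countP_map,
      List.count_cons]
    cases a <;> simpa [Function.comp_def] using ih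

theorem upsBelow_true_cons_le (t : List Bool) : upsBelow (true :: t) ≤ t.count true := by
  rw [upsBelow, List.length_cons, List.range_succ_eq_map, List.countP_cons, List.countP_map]
  simp only [List.take_zero, List.count_nil, lt_self_iff_false, decide_false, Bool.and_false,
    Bool.false_eq_true, if_false, add_zero]
  refine (List.countP_mono_left fun i _ hi => ?_).trans (List.countP_range_getD_eq_count_true t).le
  simp_all

theorem upsBelow_append_singleton_true_pos {l : List Bool} (h : l.count true < l.count false) :
    0 < upsBelow (l ++ [true]) := by
  rw [upsBelow, List.countP_pos_iff]
  exact ⟨l.length, List.mem_range.2 (by simp), by simp [h]⟩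

theorem IsUUPath.upsBelow_mem_Icc {n k : ℕ} {p : List Bool} (h : IsUUPath n k p) :
    upsBelow p ∈ Finset.Icc 1 (n - 1) := by
  obtain ⟨hlen, hcount, -, hhead, hlast⟩ := h
  obtain ⟨t, rfl⟩ := List.head?_eq_some_iff.1 hhead
  obtain ⟨l, hl⟩ := List.getLast?_eq_some_iff.1 hlast
  rw [hl, List.length_append, List.length_singleton] at hlen
  rw [hl, List.count_append, List.count_singleton_self] at hcount
  have hl_false : l.count false = n := by
    have := List.count_false_add_count_true l
    omega
  refine Finset.mem_Icc.2 ⟨?_, ?_⟩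
  · rw [hl]
    apply upsBelow_append_singleton_true_pos
    omega
  · have hle := upsBelow_true_cons_le t
    have ht : t.count true + 1 = n := by
      rw [← hcount, ← List.count_cons_self, hl, List.count_append, List.count_singleton_self]
    omega

theorem sum_pXY_true_true_eq_card (n k : ℕ) :
    ∑ m ∈ Finset.Icc 1 (n - 1), pXY n m k true true = Nat.card {p // IsUUPath n k p} := by
  rw [Nat.card_subtype_eq_sum_card_fiberwise
    ((List.finite_length_eq Bool (2 * n)).subset fun _ hp => hp.1) upsBelow _
    fun _ hp => hp.upsBelow_mem_Icc]
  refine Finset.sum_congr rfl fun m _ => Nat.card_congr (Equiv.subtypeEquivRight fun p => ?_)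
  simp only [IsNM, IsUUPath]
  tauto

theorem card_isUUPath (n k : ℕ) :
    Nat.card {p // IsUUPath (n + 1) (k + 1) p} = n.choose (k + 1) * n.choose k := by
  rw [Nat.card_congr (uuPathEquiv _ _), Nat.card_prod, Composition.card_subtype_length_eq,
    Composition.card_subtype_length_eq]

theorem stmt_10_general (n k : ℕ) (hn : 1 ≤ n) (hk : 1 ≤ k) :
    ∑ m ∈ Finset.Icc 1 (n - 1), pXY n m k true true =
      Nat.choose (n - 1) k * Nat.choose (n - 1) (k - 1) := by
  obtain ⟨n, rfl⟩ := Nat.exists_eq_add_of_le' hn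
  obtain ⟨k, rfl⟩ := Nat.exists_eq_add_of_le' hk
  rw [sum_pXY_true_true_eq_card, card_isUUPath, Nat.add_sub_cancel, Nat.add_sub_cancel]

/-- `Σ_{m=1}^{n-1} p^{UU}_{n,m,k} = C(n-1,k) * C(n-1,k-1)`. -/
theorem stmt_10 (n k : ℕ) (hn : 1 ≤ n) (hk : 1 ≤ k) (hk' : k ≤ n) :
    ∑ m ∈ Finset.Icc 1 (n - 1), pXY n m k true true =
      Nat.choose (n - 1) k * Nat.choose (n - 1) (k - 1) :=
  stmt_10_general n k hn hk
end

section
/- For integers n ≥ 1, 0 ≤ m ≤ n, and 0 ≤ k ≤ n-1, the number of (n,m)-Dyck paths with exactly k double ascents equals the number of (n,m)-Dyck paths with exactly k double descents. -/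
/-- The number of double ascents (`UU` factors) of `p`. -/
def doubleAscents (p : List Bool) : ℕ :=
  (List.range (p.length - 1)).countP fun i => p.getD i false && p.getD (i + 1) false

/-- The number of double descents (`DD` factors) of `p`. -/
def doubleDescents (p : List Bool) : ℕ :=
  (List.range (p.length - 1)).countP fun i => !p.getD i true && !p.getD (i + 1) true

/-!
Reversing a path and swapping its steps turns `UU` factors into `DD` factors and keeps the
length and the number of up steps. For a balanced path it also keeps the number of up steps
below `y = x`: the up steps of the new path below the diagonal are the down steps of the old one
ending below it, and below the diagonal a path from the diagonal back to the diagonal crosses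
each level as often upwards as downwards. In general the up steps below minus the down steps
ending below equal `min (#U - #D) 0`.
-/

theorem List.countP_range_reflect (n : ℕ) (f : ℕ → Bool) :
    (List.range n).countP (fun i => f (n - 1 - i)) = (List.range n).countP f := by
  have h : (List.range n).map (n - 1 - ·) = (List.range n).reverse := by
    rw [List.range_eq_range', List.reverse_range', ← List.range_eq_range', Nat.zero_add]
  rw [← Function.comp_def f, ← List.countP_map, h, List.countP_reverse]

theorem List.countP_range_take_getD_append_singleton {α : Type*} (F : List α → α → Bool)
    (p : List α) (a d : α) :
    (List.range (p ++ [a]).length).countP (fun i => F ((p ++ [a]).take i) ((p ++ [a]).getD i d)) =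
      (List.range p.length).countP (fun i => F (p.take i) (p.getD i d)) +
        if F p a then 1 else 0 := by
  rw [List.length_append, List.length_singleton, List.range_succ, List.countP_append]
  congr 1
  · refine List.countP_congr fun i hi => ?_
    rw [List.mem_range] at hi
    rw [List.getD_append _ _ _ _ hi, List.take_append_of_le_length hi.le]
  · simp [List.countP_singleton]

def reverseComplement (p : List Bool) : List Bool := (p.map not).reverse

theorem reverseComplement_involutive : Function.Involutive reverseComplement := fun p => by
  simp [reverseComplement, List.map_reverse, Function.comp_def]

theorem length_reverseComplement (p : List Bool) : (reverseComplement p).length = p.length := by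
  simp [reverseComplement]

theorem count_reverseComplement (p : List Bool) (b : Bool) :
    (reverseComplement p).count b = p.count (!b) := by
  rw [reverseComplement, List.count_reverse, ← Bool.not_not b,
    List.count_map_of_injective _ _ Bool.not_injective, Bool.not_not]

theorem getD_reverseComplement {p : List Bool} {i : ℕ} (hi : i < p.length) (d d' : Bool) :
    (reverseComplement p).getD i d = !p.getD (p.length - 1 - i) d' := by
  have : p.length - 1 - i < p.length := by omega
  simp [reverseComplement, List.getD_eq_getElem?_getD, hi, this]

theorem take_reverseComplement (p : List Bool) (i : ℕ) :
    (reverseComplement p).take i = reverseComplement (p.drop (p.length - i)) := by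
  simp [reverseComplement, List.take_reverse, List.map_drop]

theorem doubleDescents_reverseComplement (p : List Bool) :
    doubleDescents (reverseComplement p) = doubleAscents p := by
  unfold doubleDescents doubleAscents
  rw [length_reverseComplement, ← List.countP_range_reflect]
  refine List.countP_congr fun i hi => ?_
  rw [List.mem_range] at hi
  rw [getD_reverseComplement (by omega) true false, getD_reverseComplement (by omega) true false,
    show p.length - 1 - (p.length - 1 - 1 - i) = i + 1 by omega,
    show p.length - 1 - (p.length - 1 - 1 - i + 1) = i by omega]
  simp [Bool.and_comm]

-- A down step starting weakly below `y = x` is exactly one ending strictly below it.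
def downsEndingBelow (p : List Bool) : ℕ :=
  (List.range p.length).countP fun i =>
    !p.getD i true && decide ((p.take i).count true ≤ (p.take i).count false)

theorem upsBelow_append_singleton (p : List Bool) (a : Bool) :
    upsBelow (p ++ [a]) =
      upsBelow p + if a && decide (p.count true < p.count false) then 1 else 0 :=
  List.countP_range_take_getD_append_singleton
    (fun q b => b && decide (q.count true < q.count false)) p a false

theorem downsEndingBelow_append_singleton (p : List Bool) (a : Bool) :
    downsEndingBelow (p ++ [a]) =
      downsEndingBelow p + if !a && decide (p.count true ≤ p.count false) then 1 else 0 :=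
  List.countP_range_take_getD_append_singleton
    (fun q b => !b && decide (q.count true ≤ q.count false)) p a true

theorem upsBelow_eq_downsEndingBelow_add_min (p : List Bool) :
    (upsBelow p : ℤ) =
      downsEndingBelow p + min ((p.count true : ℤ) - p.count false) 0 := by
  induction p using List.reverseRecOn with
  | nil => rfl
  | append_singleton p a ih =>
    rw [upsBelow_append_singleton, downsEndingBelow_append_singleton, List.count_append,
      List.count_append]
    cases a <;> split_ifs <;> simp_all <;> omega

theorem upsBelow_reverseComplement_eq_downsEndingBelow {p : List Bool}
    (h : p.count true = p.count false) :
    upsBelow (reverseComplement p) = downsEndingBelow p := by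
  unfold upsBelow downsEndingBelow
  rw [length_reverseComplement, ← List.countP_range_reflect]
  refine List.countP_congr fun i hi => ?_
  rw [List.mem_range] at hi
  -- The prefix of `reverseComplement p` before its step `p.length - 1 - i` is the complemented
  -- suffix of `p` after step `i`; as `p` is balanced, its height is that of `p` after step `i`.
  rw [getD_reverseComplement (by omega) false true, take_reverseComplement,
    count_reverseComplement, count_reverseComplement,
    show p.length - 1 - (p.length - 1 - i) = i by omega,
    show p.length - (p.length - 1 - i) = i + 1 by omega]
  have hsplit : p.take i ++ p.getD i true :: p.drop (i + 1) = p := by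
    rw [List.getD_eq_getElem _ _ hi, ← List.drop_eq_getElem_cons, List.take_append_drop]
  generalize p.getD i true = b at hsplit ⊢
  rw [← hsplit, List.count_append, List.count_append, List.count_cons, List.count_cons] at h
  cases b <;> simp at h ⊢
  omega

theorem upsBelow_reverseComplement {p : List Bool} (h : p.count true = p.count false) :
    upsBelow (reverseComplement p) = upsBelow p := by
  have key := upsBelow_eq_downsEndingBelow_add_min p
  rw [h, sub_self, min_self] at key
  rw [upsBelow_reverseComplement_eq_downsEndingBelow h]
  omega

theorem IsNM.reverseComplement {n m : ℕ} {p : List Bool} (hp : IsNM n m p) :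
    IsNM n m (reverseComplement p) := by
  obtain ⟨hlen, hup, hbelow⟩ := hp
  have hdown : p.count false = n := by
    have := List.count_true_add_count_false p
    omega
  refine ⟨by rw [length_reverseComplement, hlen],
    by rw [count_reverseComplement, Bool.not_true, hdown], ?_⟩
  rw [upsBelow_reverseComplement (hup.trans hdown.symm), hbelow]

theorem isNM_reverseComplement_iff {n m : ℕ} {p : List Bool} :
    IsNM n m (reverseComplement p) ↔ IsNM n m p :=
  ⟨fun h => reverseComplement_involutive p ▸ h.reverseComplement, IsNM.reverseComplement⟩

theorem stmt_16_general (n m k : ℕ) :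
    Nat.card {p : List Bool // IsNM n m p ∧ doubleAscents p = k} =
      Nat.card {p : List Bool // IsNM n m p ∧ doubleDescents p = k} :=
  Nat.card_congr <| reverseComplement_involutive.toPerm.subtypeEquiv fun p => by
    rw [Function.Involutive.coe_toPerm, isNM_reverseComplement_iff,
      doubleDescents_reverseComplement]

/-- `a_{n,m,k} = d_{n,m,k}`: the number of `(n,m)`-Dyck paths with `k` double ascents
equals the number of `(n,m)`-Dyck paths with `k` double descents. -/
theorem stmt_16 (n m k : ℕ) (hn : 1 ≤ n) (hm : m ≤ n) (hk : k ≤ n - 1) :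
    Nat.card {p : List Bool // IsNM n m p ∧ doubleAscents p = k} =
      Nat.card {p : List Bool // IsNM n m p ∧ doubleDescents p = k} :=
  stmt_16_general n m k
end

section
/- For integers n ≥ 1, 0 ≤ m ≤ n, and 0 ≤ k ≤ n-1, the number of (n,m)-Dyck paths with exactly k peaks equals the number of (n,n-m)-Dyck paths with exactly k valleys. -/
/-- The number of valleys (`DU` factors) of `p`. -/
def valleys (p : List Bool) : ℕ :=
  (List.range (p.length - 1)).countP fun i => !p.getD i true && p.getD (i + 1) false

/-- The up steps of `p` starting strictly below the diagonal, when `p` starts at height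
`h = #U - #D`. -/
def upsBelowFrom : ℤ → List Bool → ℕ
  | _, [] => 0
  | h, true :: p => (if h < 0 then 1 else 0) + upsBelowFrom (h + 1) p
  | h, false :: p => upsBelowFrom (h - 1) p

lemma countP_range_upsBelow_eq (p : List Bool) (u d : ℕ) :
    (List.range p.length).countP (fun i =>
      p.getD i false && decide ((p.take i).count true + u < (p.take i).count false + d))
      = upsBelowFrom ((u : ℤ) - d) p := by
  induction p generalizing u d with
  | nil => rfl
  | cons a p ih =>
    rw [List.length_cons, List.range_succ_eq_map, List.countP_cons, List.countP_map]
    cases a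
    · rw [upsBelowFrom, show (u : ℤ) - d - 1 = u - (d + 1 : ℕ) by push_cast; ring, ← ih]
      simp only [Function.comp_def, List.take_succ_cons, List.getD_cons_succ,
        List.count_cons_self, List.count_cons_of_ne Bool.false_ne_true, Nat.add_right_comm _ 1, add_assoc]
      simp
    · rw [upsBelowFrom, show (u : ℤ) - d + 1 = (u + 1 : ℕ) - d by push_cast; ring, ← ih]
      simp only [Function.comp_def, List.take_succ_cons, List.getD_cons_succ,
        List.count_cons_self, List.count_cons_of_ne Bool.false_ne_true.symm, Nat.add_right_comm _ 1, add_assoc]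
      simp [add_comm]

lemma upsBelow_eq_upsBelowFrom (p : List Bool) : upsBelow p = upsBelowFrom 0 p := by
  simpa [upsBelow] using countP_range_upsBelow_eq p 0 0

/-- Telescoping of `max h 0` along the path. -/
lemma upsBelowFrom_add_upsBelowFrom_map_not (p : List Bool) (h : ℤ) :
    (upsBelowFrom h p : ℤ) + upsBelowFrom (-h) (p.map not) + max (h + p.count true - p.count false) 0
      = p.count true + max h 0 := by
  induction p generalizing h with
  | nil => simp [upsBelowFrom]
  | cons a p ih =>
    cases a
    · have := ih (h - 1)
      simp only [List.map_cons, Bool.not_false, upsBelowFrom, List.count_cons_self,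
        List.count_cons_of_ne Bool.false_ne_true, neg_sub] at this ⊢
      rw [show -h + 1 = 1 - h by ring]
      split_ifs <;> push_cast at * <;> omega
    · have := ih (h + 1)
      simp only [List.map_cons, Bool.not_true, upsBelowFrom, List.count_cons_self,
        List.count_cons_of_ne Bool.false_ne_true.symm, neg_add'] at this ⊢
      split_ifs <;> push_cast at * <;> omega

lemma upsBelow_map_not_add_upsBelow {p : List Bool} (hp : p.count true = p.count false) :
    upsBelow (p.map not) + upsBelow p = p.count true := by
  have := upsBelowFrom_add_upsBelowFrom_map_not p 0
  rw [upsBelow_eq_upsBelowFrom, upsBelow_eq_upsBelowFrom]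
  simp only [neg_zero, zero_add, hp, sub_self, max_self, add_zero] at this
  omega

lemma count_map_not (p : List Bool) (b : Bool) : (p.map not).count b = p.count (!b) := by
  simpa using List.count_map_of_injective p not Bool.not_injective (!b)

lemma IsNM.map_not {n m : ℕ} {p : List Bool} (hm : m ≤ n) (hp : IsNM n m p) :
    IsNM n (n - m) (p.map not) := by
  obtain ⟨hlen, hup, hbelow⟩ := hp
  have hdown : p.count false = n := by
    have := List.count_true_add_count_false p
    omega
  have := upsBelow_map_not_add_upsBelow (hup.trans hdown.symm)
  exact ⟨by simpa using hlen, by simpa [count_map_not] using hdown, by omega⟩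

lemma isNM_map_not_iff {n m : ℕ} {p : List Bool} (hm : m ≤ n) :
    IsNM n (n - m) (p.map not) ↔ IsNM n m p := by
  refine ⟨fun h => ?_, IsNM.map_not hm⟩
  simpa [Nat.sub_sub_self hm, Function.comp_def] using h.map_not (Nat.sub_le n m)

lemma valleys_map_not (p : List Bool) : valleys (p.map not) = peaks p := by
  unfold valleys peaks
  rw [List.length_map]
  refine List.countP_congr fun i _ => ?_
  rw [← Bool.not_false, List.getD_map, ← Bool.not_true, List.getD_map]
  simp

theorem stmt_17_general (n m k : ℕ) (hm : m ≤ n) :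
    Nat.card {p : List Bool // IsNM n m p ∧ peaks p = k} =
      Nat.card {p : List Bool // IsNM n (n - m) p ∧ valleys p = k} :=
  Nat.card_congr <| Equiv.subtypeEquiv (Function.Involutive.toPerm _ Bool.involutive_not.list_map)
    fun p => by simp [isNM_map_not_iff hm, valleys_map_not]

/-- The number of `(n,m)`-Dyck paths with `k` peaks equals the number of
`(n,n-m)`-Dyck paths with `k` valleys. -/
theorem stmt_17 (n m k : ℕ) (hn : 1 ≤ n) (hm : m ≤ n) (hk : k ≤ n - 1) :
    Nat.card {p : List Bool // IsNM n m p ∧ peaks p = k} =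
      Nat.card {p : List Bool // IsNM n (n - m) p ∧ valleys p = k} :=
  stmt_17_general n m k hm
end
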